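/- Let e be a vital edge with mincut C(e). If capacities of some contributing edges of C(e) (other than e) are decreased (or those edges deleted) and the minimum (s,t)-cut capacity of the resulting graph equals that of G, then e remains vital in the resulting graph and C(e) remains a mincut for e. -/

import Mathlib

open Finset

variable {V : Type*} [Fintype V] [DecidableEq V]

/-- capacity of the cut given by the source-side vertex set `C`:
total capacity of edges with tail in `C` and head outside `C`. -/
noncomputable def cutCap (E : Finset (V × V)) (w : V × V → ℝ) (C : Finset V) : ℝ :=
  ∑ e ∈ E.filter (fun e => e.1 ∈ C ∧ e.2 ∉ C), w e

/-- `C` is an (s,t)-cut. -/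
def IsCut (s t : V) (C : Finset V) : Prop := s ∈ C ∧ t ∉ C

/-- edge `e` is a contributing (outgoing) edge of the cut `C`. -/
def Contributes (e : V × V) (C : Finset V) : Prop := e.1 ∈ C ∧ e.2 ∉ C

/-- `f` is a feasible (s,t)-flow on edge set `E` with capacities `w`. -/
structure IsFlow (E : Finset (V × V)) (w : V × V → ℝ) (s t : V) (f : V × V → ℝ) : Prop where
  nonneg : ∀ e ∈ E, 0 ≤ f e
  le_cap : ∀ e ∈ E, f e ≤ w e
  support : ∀ e, e ∉ E → f e = 0
  conserve : ∀ v, v ≠ s → v ≠ t →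
    ∑ e ∈ E.filter (fun e => e.1 = v), f e = ∑ e ∈ E.filter (fun e => e.2 = v), f e

/-- value of an (s,t)-flow: the net flow out of `s`. -/
noncomputable def flowValue (E : Finset (V × V)) (s : V) (f : V × V → ℝ) : ℝ :=
  ∑ e ∈ E.filter (fun e => e.1 = s), f e - ∑ e ∈ E.filter (fun e => e.2 = s), f e

/-- `f` is a maximum (s,t)-flow. -/
def IsMaxFlow (E : Finset (V × V)) (w : V × V → ℝ) (s t : V) (f : V × V → ℝ) : Prop :=
  IsFlow E w s t f ∧ ∀ g, IsFlow E w s t g → flowValue E s g ≤ flowValue E s f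

/-- capacity of a minimum (s,t)-cut. -/
noncomputable def minCutCap (E : Finset (V × V)) (w : V × V → ℝ) (s t : V) : ℝ :=
  sInf {x | ∃ C : Finset V, IsCut s t C ∧ cutCap E w C = x}

/-- `e` is a vital edge: deleting it strictly decreases the min (s,t)-cut capacity. -/
def Vital (E : Finset (V × V)) (w : V × V → ℝ) (s t : V) (e : V × V) : Prop :=
  e ∈ E ∧ minCutCap (E.erase e) w s t < minCutCap E w s t

/-- `C` is a mincut for the edge `e`: a least-capacity (s,t)-cut in which `e` contributes. -/
def IsMincutFor (E : Finset (V × V)) (w : V × V → ℝ) (s t : V) (e : V × V)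
    (C : Finset V) : Prop :=
  IsCut s t C ∧ Contributes e C ∧
    ∀ C', IsCut s t C' → Contributes e C' → cutCap E w C ≤ cutCap E w C'

/-- total flow on edges leaving the cut `C`. -/
noncomputable def flowOut (E : Finset (V × V)) (f : V × V → ℝ) (C : Finset V) : ℝ :=
  ∑ e ∈ E.filter (fun e => e.1 ∈ C ∧ e.2 ∉ C), f e

/-- total flow on edges entering the cut `C`. -/
noncomputable def flowIn (E : Finset (V × V)) (f : V × V → ℝ) (C : Finset V) : ℝ :=
  ∑ e ∈ E.filter (fun e => e.1 ∉ C ∧ e.2 ∈ C), f e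

/-! Write `δ(D) = cutCap E w D - cutCap E' w' D` for the capacity a cut `D` loses. Only edges
leaving `C` lose capacity, and none gains, so `δ(D) ≤ δ(C)` for every cut `D`. Given a mincut
`C` for `e` with `w e > 0`, the edge `e` is vital exactly when every cut avoiding `e` has
capacity above `cutCap C - w e`. Subtracting `δ`, which is largest at `C`, preserves both this
and the minimality of `C` among the cuts through `e`. -/

section MinCut

variable (E : Finset (V × V)) (w : V × V → ℝ) {s t : V}

theorem finite_setOf_cutCap : {x | ∃ C : Finset V, IsCut s t C ∧ cutCap E w C = x}.Finite :=
  (Set.finite_range (cutCap E w)).subset fun _ ⟨C, _, hC⟩ => ⟨C, hC⟩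

theorem exists_cutCap_eq_minCutCap {C : Finset V} (hC : IsCut s t C) :
    ∃ D, IsCut s t D ∧ cutCap E w D = minCutCap E w s t :=
  Set.Nonempty.csInf_mem (s := {x | ∃ C : Finset V, IsCut s t C ∧ cutCap E w C = x})
    ⟨_, C, hC, rfl⟩ (finite_setOf_cutCap E w)

theorem minCutCap_le_cutCap {D : Finset V} (hD : IsCut s t D) :
    minCutCap E w s t ≤ cutCap E w D :=
  csInf_le (finite_setOf_cutCap E w).bddBelow ⟨D, hD, rfl⟩

variable {E w} {e : V × V} {D : Finset V}

omit [Fintype V] in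
theorem cutCap_erase_of_contributes (he : e ∈ E) (hD : Contributes e D) :
    cutCap (E.erase e) w D = cutCap E w D - w e := by
  rw [cutCap, cutCap, filter_erase, sum_erase_eq_sub (mem_filter.2 ⟨he, hD⟩)]

omit [Fintype V] in
theorem cutCap_erase_of_not_contributes (hD : ¬Contributes e D) :
    cutCap (E.erase e) w D = cutCap E w D := by
  have he : e ∉ E.filter fun e => e.1 ∈ D ∧ e.2 ∉ D := fun h => hD (mem_filter.1 h).2
  rw [cutCap, cutCap, filter_erase, erase_eq_of_notMem he]

/-- Deleting `e` lowers the cuts through `e` by `w e` and leaves the others unchanged. -/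
theorem vital_iff_forall_cutCap_sub_lt {C : Finset V} (hpos : 0 < w e)
    (hC : IsMincutFor E w s t e C) :
    Vital E w s t e ↔
      e ∈ E ∧ ∀ D, IsCut s t D → ¬Contributes e D → cutCap E w C - w e < cutCap E w D := by
  obtain ⟨hCcut, hCe, hCmin⟩ := hC
  constructor
  · refine fun hv => ⟨hv.1, fun D hD hDe => ?_⟩
    obtain ⟨D₁, hD₁, hD₁eq⟩ := exists_cutCap_eq_minCutCap (E.erase e) w hCcut
    have hD₁e : Contributes e D₁ := by
      by_contra h
      rw [cutCap_erase_of_not_contributes h] at hD₁eq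
      linarith [minCutCap_le_cutCap E w hD₁, hv.2]
    calc cutCap E w C - w e ≤ cutCap E w D₁ - w e := by linarith [hCmin D₁ hD₁ hD₁e]
      _ = minCutCap (E.erase e) w s t := by rw [← hD₁eq, cutCap_erase_of_contributes hv.1 hD₁e]
      _ < minCutCap E w s t := hv.2
      _ ≤ cutCap E w D := minCutCap_le_cutCap E w hD
  · rintro ⟨he, havoid⟩
    refine ⟨he, ?_⟩
    obtain ⟨D₀, hD₀, hD₀eq⟩ := exists_cutCap_eq_minCutCap E w hCcut
    have hD₀lt : cutCap E w C - w e < cutCap E w D₀ := by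
      by_cases hD₀e : Contributes e D₀
      · linarith [hCmin D₀ hD₀ hD₀e]
      · exact havoid D₀ hD₀ hD₀e
    calc minCutCap (E.erase e) w s t ≤ cutCap (E.erase e) w C := minCutCap_le_cutCap _ w hCcut
      _ = cutCap E w C - w e := cutCap_erase_of_contributes he hCe
      _ < cutCap E w D₀ := hD₀lt
      _ = minCutCap E w s t := hD₀eq

end MinCut

section CapacityLoss

variable {E E' : Finset (V × V)} {w w' : V × V → ℝ}

omit [Fintype V] in
theorem cutCap_sub_cutCap_eq_sum (hsub : E' ⊆ E) (D : Finset V) :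
    cutCap E w D - cutCap E' w' D =
      ∑ e ∈ E.filter (fun e => e.1 ∈ D ∧ e.2 ∉ D), (w e - if e ∈ E' then w' e else 0) := by
  have hrestrict : E'.filter (fun e => e.1 ∈ D ∧ e.2 ∉ D) =
      (E.filter (fun e => e.1 ∈ D ∧ e.2 ∉ D)).filter (· ∈ E') := by
    ext a
    simp only [mem_filter]
    exact ⟨fun h => ⟨⟨hsub h.1, h.2⟩, h.1⟩, fun h => ⟨h.2, h.1.2⟩⟩
  rw [sum_sub_distrib, ← sum_filter, ← hrestrict, cutCap, cutCap]

omit [Fintype V] in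
theorem cutCap_sub_cutCap_le_of_changed_contribute {C : Finset V} (hsub : E' ⊆ E)
    (hnonneg : ∀ e ∈ E, 0 ≤ w e) (hle : ∀ e ∈ E', w' e ≤ w e)
    (hchanged : ∀ e ∈ E, (e ∉ E' ∨ w' e ≠ w e) → Contributes e C) (D : Finset V) :
    cutCap E w D - cutCap E' w' D ≤ cutCap E w C - cutCap E' w' C := by
  set loss : V × V → ℝ := fun e => w e - if e ∈ E' then w' e else 0
  have hloss_nonneg : ∀ e ∈ E, 0 ≤ loss e := by
    intro e he
    by_cases he' : e ∈ E'
    · simp only [loss, if_pos he', sub_nonneg, hle e he']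
    · simp only [loss, if_neg he', sub_zero, hnonneg e he]
  have hloss_support : ∀ e ∈ E, loss e ≠ 0 → Contributes e C := by
    refine fun e he hloss => hchanged e he ?_
    by_contra! h
    simp [loss, h.1, h.2] at hloss
  rw [cutCap_sub_cutCap_eq_sum hsub, cutCap_sub_cutCap_eq_sum hsub]
  calc ∑ e ∈ E.filter (fun e => e.1 ∈ D ∧ e.2 ∉ D), loss e
      = ∑ e ∈ (E.filter (fun e => e.1 ∈ D ∧ e.2 ∉ D)).filter (fun e => e.1 ∈ C ∧ e.2 ∉ C),
          loss e :=
        (sum_filter_of_ne (p := fun e => e.1 ∈ C ∧ e.2 ∉ C)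
          fun e he => hloss_support e (mem_filter.1 he).1).symm
    _ ≤ ∑ e ∈ E.filter (fun e => e.1 ∈ C ∧ e.2 ∉ C), loss e :=
        sum_le_sum_of_subset_of_nonneg (filter_subset_filter _ (filter_subset _ _))
          fun e he _ => hloss_nonneg e (mem_filter.1 he).1

end CapacityLoss

theorem vital_edge_remains_vital_general (E E' : Finset (V × V)) (w w' : V × V → ℝ) (s t : V)
    (hpos : ∀ e ∈ E, 0 < w e)
    (e : V × V) (hvit : Vital E w s t e) (C : Finset V) (hC : IsMincutFor E w s t e C)
    (hsub : E' ⊆ E)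
    (hw' : ∀ e' ∈ E', 0 ≤ w' e' ∧ w' e' ≤ w e')
    (hchanged : ∀ e' ∈ E, (e' ∉ E' ∨ w' e' ≠ w e') → Contributes e' C ∧ e' ≠ e) :
    Vital E' w' s t e ∧ IsMincutFor E' w' s t e C := by
  have heE : e ∈ E := hvit.1
  have heE' : e ∈ E' := by_contra fun h => (hchanged e heE (Or.inl h)).2 rfl
  have hwe : w' e = w e := by_contra fun h => (hchanged e heE (Or.inr h)).2 rfl
  have hloss (D : Finset V) : cutCap E w D - cutCap E' w' D ≤ cutCap E w C - cutCap E' w' C :=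
    cutCap_sub_cutCap_le_of_changed_contribute hsub (fun e' he' => (hpos e' he').le)
      (fun e' he' => (hw' e' he').2) (fun e' he' h => (hchanged e' he' h).1) D
  have hC' : IsMincutFor E' w' s t e C :=
    ⟨hC.1, hC.2.1, fun D hD hDe => by linarith [hC.2.2 D hD hDe, hloss D]⟩
  have havoid := ((vital_iff_forall_cutCap_sub_lt (hpos e heE) hC).1 hvit).2
  refine ⟨(vital_iff_forall_cutCap_sub_lt (hwe ▸ hpos e heE) hC').2 ⟨heE', ?_⟩, hC'⟩
  intro D hD hDe
  linarith [havoid D hD hDe, hloss D]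

/-- if capacities of some contributing edges of `C(e)` other than `e` are decreased
(or those edges deleted) without changing the min (s,t)-cut capacity, then `e`
remains vital and `C(e)` remains a mincut for `e`. -/
theorem vital_edge_remains_vital (E E' : Finset (V × V)) (w w' : V × V → ℝ) (s t : V)
    (hst : s ≠ t) (hpos : ∀ e ∈ E, 0 < w e)
    (e : V × V) (hvit : Vital E w s t e) (C : Finset V) (hC : IsMincutFor E w s t e C)
    (hsub : E' ⊆ E) (heE' : e ∈ E')
    (hw' : ∀ e' ∈ E', 0 ≤ w' e' ∧ w' e' ≤ w e')
    (hchanged : ∀ e' ∈ E, (e' ∉ E' ∨ w' e' ≠ w e') → Contributes e' C ∧ e' ≠ e)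
    (heq : minCutCap E' w' s t = minCutCap E w s t) :
    Vital E' w' s t e ∧ IsMincutFor E' w' s t e C :=
  vital_edge_remains_vital_general E E' w w' s t hpos e hvit C hC hsub hw' hchanged
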